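/- Let B be an annihilator nilpotent skew brace. If Ann(B) is finite and B is finitely generated as a skew brace, then B is finite. -/

import Mathlib

/-- A skew brace: a type with two group structures `(B,+)` and `(B,∘)`
(the multiplicative group is written with `*`) sharing the same underlying set,
such that `a ∘ (b + c) = a ∘ b - a + a ∘ c`. -/
class SkewBrace (B : Type*) extends AddGroup B, Group B where
  circ_add : ∀ a b c : B, a * (b + c) = a * b - a + a * c

namespace SkewBrace

variable {B : Type*} [SkewBrace B]

/-- `lam a b = -a + a ∘ b`, i.e. `λ_a(b)`. -/
def lam (a b : B) : B := -a + a * b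

/-- `a * b` (the star operation) `= λ_a(b) - b = -a + a ∘ b - b`. -/
def starOp (a b : B) : B := -a + a * b - b

/-- `X * Y` : the additive subgroup generated by all `x * y`, `x ∈ X`, `y ∈ Y`,
regarded as a set. -/
def starSpan (X Y : Set B) : Set B :=
  (AddSubgroup.closure {z : B | ∃ x ∈ X, ∃ y ∈ Y, z = starOp x y} : AddSubgroup B)

/-- `[X,Y]₊` : the additive subgroup generated by all additive commutators
`x + y - x - y`, `x ∈ X`, `y ∈ Y`, regarded as a set. -/
def addCommSpan (X Y : Set B) : Set B :=
  (AddSubgroup.closure {z : B | ∃ x ∈ X, ∃ y ∈ Y, z = x + y - x - y} : AddSubgroup B)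

/-- A sub skew brace: a subset containing `0` and closed under both group
operations and both inverses. -/
def IsSubSkewBrace (S : Set B) : Prop :=
  0 ∈ S ∧ (∀ a ∈ S, ∀ b ∈ S, a + b ∈ S) ∧ (∀ a ∈ S, -a ∈ S) ∧
    (∀ a ∈ S, ∀ b ∈ S, a * b ∈ S) ∧ (∀ a ∈ S, a⁻¹ ∈ S)

/-- An ideal: a sub skew brace that is normal in `(B,+)` and in `(B,∘)` and
invariant under all `λ_a`. -/
def IsIdeal (S : Set B) : Prop :=
  IsSubSkewBrace S ∧ (∀ a : B, ∀ i ∈ S, a + i - a ∈ S) ∧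
    (∀ a : B, ∀ i ∈ S, a * i * a⁻¹ ∈ S) ∧ (∀ a : B, ∀ i ∈ S, lam a i ∈ S)

/-- The annihilator `Ann(B) = {x | x∘a = a∘x = x+a = a+x for all a}`. -/
def annSet (B : Type*) [SkewBrace B] : Set B :=
  {x | ∀ a : B, x * a = a * x ∧ x * a = x + a ∧ x + a = a + x}

/-- The annihilator series: `Ann₀(B) = 0` and `Ann_{n+1}(B)` is the preimage of
`Ann(B/Annₙ(B))` under the quotient map; membership is expressed via coset
equalities modulo `Annₙ(B)`. -/
def annSeries (B : Type*) [SkewBrace B] : ℕ → Set B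
  | 0 => {0}
  | n + 1 => {x | ∀ a : B,
      x * a - a * x ∈ annSeries B n ∧
      x * a - (x + a) ∈ annSeries B n ∧
      (x + a) - (a + x) ∈ annSeries B n}

/-- `B` is annihilator nilpotent if `Annₙ(B) = B` for some `n`. -/
def AnnNilpotent (B : Type*) [SkewBrace B] : Prop :=
  ∃ n : ℕ, annSeries B n = Set.univ

/-- `leftPow B n` is `B^{n+1}`: `B¹ = B`, `B^{n+1} = B * Bⁿ`. -/
def leftPow (B : Type*) [SkewBrace B] : ℕ → Set B
  | 0 => Set.univ
  | n + 1 => starSpan Set.univ (leftPow B n)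

/-- `rightPow B n` is `B⁽ⁿ⁺¹⁾`: `B⁽¹⁾ = B`, `B⁽ⁿ⁺¹⁾ = B⁽ⁿ⁾ * B`. -/
def rightPow (B : Type*) [SkewBrace B] : ℕ → Set B
  | 0 => Set.univ
  | n + 1 => starSpan (rightPow B n) Set.univ

/-- `B` is left nilpotent if `Bⁿ = 0` for some `n ≥ 1`. -/
def LeftNilpotent (B : Type*) [SkewBrace B] : Prop :=
  ∃ n : ℕ, leftPow B n = ({0} : Set B)

/-- `B` is right nilpotent if `B⁽ⁿ⁾ = 0` for some `n ≥ 1`. -/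
def RightNilpotent (B : Type*) [SkewBrace B] : Prop :=
  ∃ n : ℕ, rightPow B n = ({0} : Set B)

/-- `strongPow B n` is `B^[n+1]`: `B^[1] = B`, and `B^[n+1]` is the additive
subgroup generated by `⋃_{i=1}^{n} B^[i] * B^[n+1-i]`. -/
def strongPow (B : Type*) [SkewBrace B] : ℕ → Set B
  | 0 => Set.univ
  | n + 1 => (AddSubgroup.closure (⋃ j : Fin (n + 1),
      {z : B | ∃ x ∈ strongPow B j.1, ∃ y ∈ strongPow B (n - j.1), z = starOp x y}) :
        AddSubgroup B)
  decreasing_by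
  · exact j.isLt
  · omega

/-- `B` is strongly nilpotent if `B^[n] = 0` for some `n ≥ 1`. -/
def StronglyNilpotent (B : Type*) [SkewBrace B] : Prop :=
  ∃ n : ℕ, strongPow B n = ({0} : Set B)

/-- `gammaAux B n` is `Γ_[n+1](B)`: `Γ_[1](B) = B` and, for `n ≥ 2`, `Γ_[n](B)` is
the additive subgroup generated by the sets `Γ_[i](B) * Γ_[n-i](B)` and
`[Γ_[i](B), Γ_[n-i](B)]₊` for `1 ≤ i ≤ n-1`. -/
def gammaAux (B : Type*) [SkewBrace B] : ℕ → Set B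
  | 0 => Set.univ
  | n + 1 => (AddSubgroup.closure (⋃ j : Fin (n + 1),
      {z : B | ∃ x ∈ gammaAux B j.1, ∃ y ∈ gammaAux B (n - j.1),
        z = starOp x y ∨ z = x + y - x - y}) : AddSubgroup B)
  decreasing_by
  · exact j.isLt
  · omega

/-- `Γ_[n](B)` for `n ≥ 1` (one-based indexing as in the paper). -/
def gammaBr (B : Type*) [SkewBrace B] (n : ℕ) : Set B := gammaAux B (n - 1)

/-- `B` is finitely generated as a skew brace: there is a finite subset whose
smallest containing sub skew brace is `B` itself. -/
def SBFinitelyGenerated (B : Type*) [SkewBrace B] : Prop :=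
  ∃ S : Set B, S.Finite ∧ ∀ T : Set B, IsSubSkewBrace T → S ⊆ T → T = Set.univ

/-- `B` satisfies the ascending chain condition on sub skew braces. -/
def ACCSubSkewBrace (B : Type*) [SkewBrace B] : Prop :=
  ∀ f : ℕ → Set B, (∀ n, IsSubSkewBrace (f n)) → (∀ n, f n ⊆ f (n + 1)) →
    ∃ N : ℕ, ∀ n, N ≤ n → f n = f N

/-!
Induction on the annihilator length, where finiteness of `Ann(B)` is replaced by a uniform
exponent `e` with `e • Ann(B) = 0`. For `x` in the second annihilator the maps
`a ↦ x * a`, `a ↦ a * x` (star products) and `a ↦ ⁅x, a⁆` (commutator in `(B, ∘)`) take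
values in `Ann(B)` and are multiplicative in `x`; hence `x ^ e ∈ Ann(B)`, so `e` also kills
`Ann(B / Ann(B))`, and `B / Ann(B)` is finite by induction. A finite set `R` of coset
representatives is closed under the operations of `B` up to finitely many corrections in
`Ann(B)`; since `Ann(B)` is central in both groups, these corrections together with `R` generate
a sub skew brace, which therefore is `B`. So `Ann(B)` is a finitely generated abelian group of
exponent `e`, hence finite, and `B` is finite.
-/

open scoped Pointwise commutatorElement

theorem one_eq_zero : (1 : B) = 0 := by
  have h := circ_add (1 : B) 0 0
  simp only [one_mul, add_zero, zero_sub] at h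
  exact neg_eq_zero.mp h.symm

theorem mul_zero_eq_self (a : B) : a * 0 = a := by
  rw [← one_eq_zero, mul_one]

theorem zero_mul_eq_self (a : B) : 0 * a = a := by
  rw [← one_eq_zero, one_mul]

theorem mul_eq_add_lam (a b : B) : a * b = a + lam a b := by
  rw [lam, add_neg_cancel_left]

theorem lam_add (a b c : B) : lam a (b + c) = lam a b + lam a c := by
  simp only [lam, circ_add, sub_eq_add_neg, add_assoc]

theorem lam_mul (a b c : B) : lam (a * b) c = lam a (lam b c) := by
  refine add_left_cancel (a := a * b) ?_
  rw [← mul_eq_add_lam, mul_assoc, mul_eq_add_lam b, mul_eq_add_lam a, lam_add, ← add_assoc,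
    ← mul_eq_add_lam]

theorem starOp_eq_lam_sub (a b : B) : starOp a b = lam a b - b := rfl

section Annihilator

variable {z : B}

theorem mul_ann_comm (hz : z ∈ annSet B) (a : B) : z * a = a * z := (hz a).1

theorem ann_mul_eq_add (hz : z ∈ annSet B) (a : B) : z * a = z + a := (hz a).2.1

theorem ann_add_comm (hz : z ∈ annSet B) (a : B) : z + a = a + z := (hz a).2.2

theorem mul_ann_eq_add (hz : z ∈ annSet B) (a : B) : a * z = a + z := by
  rw [← mul_ann_comm hz, ann_mul_eq_add hz, ann_add_comm hz]

theorem lam_ann (hz : z ∈ annSet B) (a : B) : lam a z = z := by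
  rw [lam, mul_ann_eq_add hz, neg_add_cancel_left]

theorem lam_of_ann (hz : z ∈ annSet B) (a : B) : lam z a = a := by
  rw [lam, ann_mul_eq_add hz, neg_add_cancel_left]

theorem ann_inv_eq_neg (hz : z ∈ annSet B) : z⁻¹ = -z := by
  refine eq_neg_of_add_eq_zero_right ?_
  rw [← ann_mul_eq_add hz, mul_inv_cancel, one_eq_zero]

theorem mem_annSet_iff {x : B} :
    x ∈ annSet B ↔ ∀ a, starOp x a = 0 ∧ starOp a x = 0 ∧ ⁅x, a⁆ = 1 := by
  refine ⟨fun hx a => ?_, fun h a => ?_⟩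
  · rw [starOp, starOp, commutatorElement_eq_one_iff_mul_comm, ann_mul_eq_add hx,
      mul_ann_eq_add hx]
    exact ⟨by simp, by simp, ann_add_comm hx a⟩
  · obtain ⟨hxa, hax, hcomm⟩ := h a
    rw [starOp_eq_lam_sub, sub_eq_zero] at hxa hax
    rw [commutatorElement_eq_one_iff_mul_comm] at hcomm
    have hxa' : x * a = x + a := by rw [mul_eq_add_lam, hxa]
    have hax' : a * x = a + x := by rw [mul_eq_add_lam, hax]
    exact ⟨hcomm, hxa', by rw [← hxa', hcomm, hax']⟩

variable (B) in
def ann : AddSubgroup B where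
  carrier := annSet B
  zero_mem' a := by simp [zero_mul_eq_self, mul_zero_eq_self]
  add_mem' {z w} hz hw a := by
    refine ⟨?_, ?_, ?_⟩
    · rw [← ann_mul_eq_add hz, mul_assoc, mul_ann_comm hw, ← mul_assoc, mul_ann_comm hz,
        mul_assoc]
    · rw [← ann_mul_eq_add hz, mul_assoc, ann_mul_eq_add hz, ann_mul_eq_add hw,
        ann_mul_eq_add hz, add_assoc]
    · rw [add_assoc, ann_add_comm hw, ← add_assoc, ann_add_comm hz, add_assoc]
  neg_mem' {z} hz a := by
    have hinv_mul : z⁻¹ * a = z⁻¹ + a := mul_left_cancel (a := z) <| by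
      rw [← mul_assoc, mul_inv_cancel, one_mul, ann_mul_eq_add hz, ← add_assoc,
        ← ann_mul_eq_add hz, mul_inv_cancel, one_eq_zero, zero_add]
    have hmul_inv : a * z⁻¹ = a + z⁻¹ := mul_right_cancel (b := z) <| by
      rw [mul_assoc, inv_mul_cancel, mul_one, mul_ann_eq_add hz, add_assoc,
        ← mul_ann_eq_add hz, inv_mul_cancel, one_eq_zero, add_zero]
    have hcomm : z⁻¹ * a = a * z⁻¹ := by
      rw [inv_mul_eq_iff_eq_mul, ← mul_assoc, mul_ann_comm hz, mul_assoc, mul_inv_cancel,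
        mul_one]
    rw [← ann_inv_eq_neg hz]
    exact ⟨hcomm, hinv_mul, by rw [← hinv_mul, hcomm, hmul_inv]⟩

theorem mem_ann : z ∈ ann B ↔ z ∈ annSet B := Iff.rfl

instance : (ann B).Normal :=
  ⟨fun z hz a => by rw [← ann_add_comm hz, add_neg_cancel_right]; exact hz⟩

theorem mul_mem_ann {w : B} (hz : z ∈ ann B) (hw : w ∈ ann B) : z * w ∈ ann B := by
  rw [ann_mul_eq_add hz]; exact add_mem hz hw

theorem inv_mem_ann (hz : z ∈ ann B) : z⁻¹ ∈ ann B := by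
  rw [ann_inv_eq_neg hz]; exact neg_mem hz

theorem ann_pow_eq_nsmul (hz : z ∈ annSet B) (k : ℕ) : z ^ k = k • z := by
  induction k with
  | zero => rw [pow_zero, zero_smul, one_eq_zero]
  | succ k ih => rw [pow_succ, ih, succ_nsmul, mul_ann_eq_add hz]

end Annihilator

section Quotient

theorem neg_add_mul_mem_ann {x x' y y' : B} (hx : -x + x' ∈ ann B) (hy : -y + y' ∈ ann B) :
    -(x * y) + x' * y' ∈ ann B := by
  obtain ⟨z, hz, rfl⟩ : ∃ z ∈ ann B, x' = x * z :=
    ⟨_, hx, by rw [mul_ann_eq_add hx, add_neg_cancel_left]⟩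
  obtain ⟨w, hw, rfl⟩ : ∃ w ∈ ann B, y' = y * w :=
    ⟨_, hy, by rw [mul_ann_eq_add hy, add_neg_cancel_left]⟩
  have hzw := mul_mem_ann hz hw
  rwa [mul_assoc, ← mul_assoc z, mul_ann_comm hz, mul_assoc y, ← mul_assoc x,
    mul_ann_eq_add hzw, neg_add_cancel_left]

theorem neg_add_inv_mem_ann {x x' : B} (hx : -x + x' ∈ ann B) : -x⁻¹ + x'⁻¹ ∈ ann B := by
  obtain ⟨z, hz, rfl⟩ : ∃ z ∈ ann B, x' = x * z :=
    ⟨_, hx, by rw [mul_ann_eq_add hx, add_neg_cancel_left]⟩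
  have hz' := inv_mem_ann hz
  rwa [mul_inv_rev, mul_ann_comm hz', mul_ann_eq_add hz', neg_add_cancel_left]

instance : Mul (B ⧸ ann B) :=
  ⟨Quotient.map₂ (· * ·) fun _ _ hx _ _ hy => QuotientAddGroup.leftRel_apply.mpr <|
    neg_add_mul_mem_ann (QuotientAddGroup.leftRel_apply.mp hx)
      (QuotientAddGroup.leftRel_apply.mp hy)⟩

instance : Inv (B ⧸ ann B) :=
  ⟨Quotient.map (·⁻¹) fun _ _ hx => QuotientAddGroup.leftRel_apply.mpr <|
    neg_add_inv_mem_ann (QuotientAddGroup.leftRel_apply.mp hx)⟩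

instance : One (B ⧸ ann B) := ⟨((1 : B) : B ⧸ ann B)⟩

theorem mk_mul (x y : B) : ((x * y : B) : B ⧸ ann B) = x * y := rfl

theorem mk_inv (x : B) : ((x⁻¹ : B) : B ⧸ ann B) = (x : B ⧸ ann B)⁻¹ := rfl

theorem mk_one : ((1 : B) : B ⧸ ann B) = 1 := rfl

instance : Group (B ⧸ ann B) :=
  Group.ofLeftAxioms
    (fun a b c => by
      induction a using QuotientAddGroup.induction_on
      induction b using QuotientAddGroup.induction_on
      induction c using QuotientAddGroup.induction_on
      simp only [← mk_mul, mul_assoc])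
    (fun a => by
      induction a using QuotientAddGroup.induction_on
      rw [← mk_one, ← mk_mul, one_mul])
    (fun a => by
      induction a using QuotientAddGroup.induction_on
      rw [← mk_inv, ← mk_mul, inv_mul_cancel, mk_one])

instance : SkewBrace (B ⧸ ann B) where
  circ_add a b c := by
    induction a using QuotientAddGroup.induction_on
    induction b using QuotientAddGroup.induction_on
    induction c using QuotientAddGroup.induction_on
    simp only [← QuotientAddGroup.mk_add, ← mk_mul, ← QuotientAddGroup.mk_sub, circ_add]

theorem mk_pow (x : B) (k : ℕ) : ((x ^ k : B) : B ⧸ ann B) = (x : B ⧸ ann B) ^ k := by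
  induction k with
  | zero => rw [pow_zero, pow_zero, mk_one]
  | succ k ih => rw [pow_succ, mk_mul, ih, pow_succ]

theorem mk_starOp (x y : B) :
    ((starOp x y : B) : B ⧸ ann B) = starOp (x : B ⧸ ann B) (y : B ⧸ ann B) := by
  simp only [starOp, QuotientAddGroup.mk_sub, QuotientAddGroup.mk_add, QuotientAddGroup.mk_neg,
    mk_mul]

theorem mk_commutatorElement (x y : B) :
    ((⁅x, y⁆ : B) : B ⧸ ann B) = ⁅(x : B ⧸ ann B), (y : B ⧸ ann B)⁆ := by
  simp only [commutatorElement_def, mk_mul, mk_inv]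

end Quotient

section Series

theorem mem_annSeries_succ {x : B} {k : ℕ} :
    x ∈ annSeries B (k + 1) ↔ ∀ a : B, x * a - a * x ∈ annSeries B k ∧
      x * a - (x + a) ∈ annSeries B k ∧ (x + a) - (a + x) ∈ annSeries B k :=
  Iff.rfl

theorem annSeries_one : annSeries B 1 = annSet B := by
  ext x
  simp only [annSeries, Set.mem_singleton_iff, sub_eq_zero]
  rfl

theorem annSeries_succ_eq_preimage (k : ℕ) :
    annSeries B (k + 1) = (↑) ⁻¹' annSeries (B ⧸ ann B) k := by
  induction k with
  | zero =>
    ext x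
    rw [annSeries_one, Set.mem_preimage, annSeries, Set.mem_singleton_iff,
      QuotientAddGroup.eq_zero_iff, mem_ann]
  | succ k ih =>
    ext x
    simp only [Set.mem_preimage, mem_annSeries_succ, ih, QuotientAddGroup.mk_surjective.forall,
      QuotientAddGroup.mk_sub, QuotientAddGroup.mk_add, mk_mul]

theorem annSeries_quotient_eq_univ {n : ℕ} (h : annSeries B (n + 1) = Set.univ) :
    annSeries (B ⧸ ann B) n = Set.univ := by
  rw [annSeries_succ_eq_preimage, Set.preimage_eq_univ_iff] at h
  rwa [(QuotientAddGroup.mk_surjective (s := ann B)).range_eq, Set.univ_subset_iff] at h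

end Series

theorem IsSubSkewBrace.preimage_mk {T : Set (B ⧸ ann B)} (hT : IsSubSkewBrace T) :
    IsSubSkewBrace (((↑) : B → B ⧸ ann B) ⁻¹' T) := by
  obtain ⟨h0, hadd, hneg, hmul, hinv⟩ := hT
  exact ⟨h0, fun a ha b hb => hadd _ ha _ hb, fun a ha => hneg _ ha,
    fun a ha b hb => hmul _ ha _ hb, fun a ha => hinv _ ha⟩

theorem SBFinitelyGenerated.quotient (hfg : SBFinitelyGenerated B) :
    SBFinitelyGenerated (B ⧸ ann B) := by
  obtain ⟨S, hS, hgen⟩ := hfg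
  refine ⟨(↑) '' S, hS.image _, fun T hT hST => ?_⟩
  have h := hgen _ hT.preimage_mk (Set.image_subset_iff.mp hST)
  rw [← Set.image_preimage_eq T QuotientAddGroup.mk_surjective, h, Set.image_univ,
    QuotientAddGroup.mk_surjective.range_eq]

section SecondAnnihilator

theorem starOp_mem_ann_of_mk_mem_ann {x : B} (hx : (x : B ⧸ ann B) ∈ ann (B ⧸ ann B))
    (a : B) : starOp x a ∈ ann B ∧ starOp a x ∈ ann B ∧ ⁅x, a⁆ ∈ ann B := by
  obtain ⟨hxa, hax, hcomm⟩ := mem_annSet_iff.mp hx a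
  simp only [← QuotientAddGroup.eq_zero_iff, mk_starOp, mk_commutatorElement, hxa, hax, hcomm,
    one_eq_zero, and_self]

theorem lam_comm {x a : B} (h : ⁅x, a⁆ ∈ ann B) (c : B) :
    lam a (lam x c) = lam x (lam a c) := by
  have hxa : x * a = ⁅x, a⁆ * (a * x) := by rw [commutatorElement_def]; group
  rw [← lam_mul a x, ← lam_mul x a, hxa, lam_mul ⁅x, a⁆, lam_of_ann h]

theorem starOp_mul_left {x y a : B} (hy : starOp y a ∈ ann B) :
    starOp (x * y) a = starOp x a + starOp y a := by
  rw [starOp_eq_lam_sub, lam_mul, ← sub_add_cancel (lam y a) a, ← starOp_eq_lam_sub, lam_add,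
    lam_ann hy, add_sub_assoc, ← starOp_eq_lam_sub, ann_add_comm hy]

theorem starOp_mul_right {a x y : B} (hx : ⁅x, a⁆ ∈ ann B) (hy : starOp a y ∈ ann B) :
    starOp a (x * y) = starOp a x + starOp a y := by
  have hlam : lam a (lam x y) = starOp a y + lam x y := by
    rw [lam_comm hx, ← sub_add_cancel (lam a y) y, ← starOp_eq_lam_sub, lam_add, lam_ann hy]
  rw [starOp_eq_lam_sub, mul_eq_add_lam x y, lam_add, hlam, starOp_eq_lam_sub a x]
  simp only [sub_eq_add_neg, neg_add_rev, add_assoc, add_neg_cancel_left]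
  rw [ann_add_comm hy]

theorem commutatorElement_mul_left {x y a : B} (hy : ⁅y, a⁆ ∈ ann B) :
    ⁅x * y, a⁆ = ⁅x, a⁆ + ⁅y, a⁆ := by
  have hconj : ⁅x * y, a⁆ = x * ⁅y, a⁆ * x⁻¹ * ⁅x, a⁆ := by
    simp only [commutatorElement_def]; group
  rw [hconj, ← mul_ann_comm hy, mul_inv_cancel_right, ann_mul_eq_add hy, ann_add_comm hy]

theorem pow_mem_ann {x : B} (hx : (x : B ⧸ ann B) ∈ ann (B ⧸ ann B)) {e : ℕ}
    (hexp : ∀ z ∈ ann B, e • z = 0) : x ^ e ∈ ann B := by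
  have hpow_mem (k : ℕ) : ((x ^ k : B) : B ⧸ ann B) ∈ ann (B ⧸ ann B) := by
    rw [mk_pow, ann_pow_eq_nsmul hx]
    exact nsmul_mem hx k
  have hpow (k : ℕ) (a : B) : starOp (x ^ k) a = k • starOp x a ∧
      starOp a (x ^ k) = k • starOp a x ∧ ⁅x ^ k, a⁆ = k • ⁅x, a⁆ := by
    induction k with
    | zero =>
      have hone : (1 : B) ∈ ann B := by rw [one_eq_zero]; exact zero_mem _
      obtain ⟨h1, h2, h3⟩ := mem_annSet_iff.mp hone a
      rw [pow_zero, h1, h2, h3, one_eq_zero]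
      simp
    | succ k ih =>
      obtain ⟨hxa, hax, hcomm⟩ := starOp_mem_ann_of_mk_mem_ann hx a
      obtain ⟨-, -, hcomm_k⟩ := starOp_mem_ann_of_mk_mem_ann (hpow_mem k) a
      rw [pow_succ, starOp_mul_left hxa, starOp_mul_right hcomm_k hax,
        commutatorElement_mul_left hcomm, ih.1, ih.2.1, ih.2.2, succ_nsmul, succ_nsmul,
        succ_nsmul]
      exact ⟨rfl, rfl, rfl⟩
  refine mem_annSet_iff.mpr fun a => ?_
  obtain ⟨hxa, hax, hcomm⟩ := starOp_mem_ann_of_mk_mem_ann hx a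
  obtain ⟨h1, h2, h3⟩ := hpow e a
  rw [h1, h2, h3, hexp _ hxa, hexp _ hax, hexp _ hcomm, one_eq_zero]
  exact ⟨rfl, rfl, rfl⟩

theorem nsmul_eq_zero_of_mem_ann_quotient {e : ℕ} (hexp : ∀ z ∈ ann B, e • z = 0)
    {q : B ⧸ ann B} (hq : q ∈ ann (B ⧸ ann B)) : e • q = 0 := by
  obtain ⟨x, rfl⟩ := QuotientAddGroup.mk_surjective q
  rw [← ann_pow_eq_nsmul hq, ← mk_pow, QuotientAddGroup.eq_zero_iff]
  exact pow_mem_ann hq hexp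

end SecondAnnihilator

section FiniteGeneration

theorem isSubSkewBrace_add_of_le_ann {A : AddSubgroup B} (hA : A ≤ ann B) {R : Set B}
    (h0 : (0 : B) ∈ (A : Set B) + R)
    (hadd : ∀ r ∈ R, ∀ r' ∈ R, r + r' ∈ (A : Set B) + R)
    (hneg : ∀ r ∈ R, -r ∈ (A : Set B) + R)
    (hmul : ∀ r ∈ R, ∀ r' ∈ R, r * r' ∈ (A : Set B) + R)
    (hinv : ∀ r ∈ R, r⁻¹ ∈ (A : Set B) + R) : IsSubSkewBrace ((A : Set B) + R) := by
  have hshift {a b : B} (ha : a ∈ A) (hb : b ∈ (A : Set B) + R) :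
      a + b ∈ (A : Set B) + R := by
    obtain ⟨a', ha', r, hr, rfl⟩ := hb
    exact ⟨a + a', A.add_mem ha ha', r, hr, add_assoc a a' r⟩
  refine ⟨h0, ?_, ?_, ?_, ?_⟩
  · rintro _ ⟨a, ha, r, hr, rfl⟩ _ ⟨a', ha', r', hr', rfl⟩
    dsimp only
    rw [add_assoc, ← add_assoc r, ← ann_add_comm (hA ha'), add_assoc, ← add_assoc]
    exact hshift (A.add_mem ha ha') (hadd r hr r' hr')
  · rintro _ ⟨a, ha, r, hr, rfl⟩
    dsimp only
    rw [neg_add_rev, ← ann_add_comm (hA (A.neg_mem ha))]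
    exact hshift (A.neg_mem ha) (hneg r hr)
  · rintro _ ⟨a, ha, r, hr, rfl⟩ _ ⟨a', ha', r', hr', rfl⟩
    dsimp only
    rw [← ann_mul_eq_add (hA ha), ← ann_mul_eq_add (hA ha'), mul_assoc, ← mul_assoc r,
      ← mul_ann_comm (hA ha'), mul_assoc, ← mul_assoc,
      ann_mul_eq_add (mul_mem_ann (hA ha) (hA ha')), ann_mul_eq_add (hA ha) a']
    exact hshift (A.add_mem ha ha') (hmul r hr r' hr')
  · rintro _ ⟨a, ha, r, hr, rfl⟩
    dsimp only
    rw [← ann_mul_eq_add (hA ha), mul_inv_rev, ← mul_ann_comm (inv_mem_ann (hA ha)),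
      ann_mul_eq_add (inv_mem_ann (hA ha)), ann_inv_eq_neg (hA ha)]
    exact hshift (A.neg_mem ha) (hinv r hr)

theorem ann_fg_of_finite_quotient [Finite (B ⧸ ann B)] (hfg : SBFinitelyGenerated B) :
    (ann B).FG := by
  obtain ⟨S, hS, hgen⟩ := hfg
  set R : Set B := Set.range (Quotient.out : B ⧸ ann B → B)
  have hR : R.Finite := Set.finite_range _
  -- `0 ∈ E` puts `-r` into `D` for every representative `r ∈ Ann(B)`.
  set E : Set B := insert 0 (R + R ∪ -R ∪ R * R ∪ R⁻¹ ∪ S)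
  have hE : E.Finite :=
    ((((hR.add hR).union hR.neg).union (hR.mul hR)).union hR.inv |>.union hS).insert 0
  set D : Set B := (ann B : Set B) ∩ Set.image2 (fun r y => -r + y) R E
  have hD : D.Finite := (hR.image2 _ hE).subset Set.inter_subset_right
  set A := AddSubgroup.closure D
  have hA : A ≤ ann B := (AddSubgroup.closure_le _).mpr Set.inter_subset_left
  have hE_sub {y : B} (hy : y ∈ E) : y ∈ (A : Set B) + R := by
    set r := Quotient.out (y : B ⧸ ann B)
    have hry : -r + y ∈ ann B := QuotientAddGroup.leftRel_apply.mp (Quotient.mk_out y)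
    refine ⟨-r + y, AddSubgroup.subset_closure ⟨hry, r, ⟨_, rfl⟩, y, hy, rfl⟩,
      r, ⟨_, rfl⟩, ?_⟩
    show -r + y + r = y
    rw [ann_add_comm hry, add_neg_cancel_left]
  have hsub : IsSubSkewBrace ((A : Set B) + R) :=
    isSubSkewBrace_add_of_le_ann hA (hE_sub (Set.mem_insert _ _))
      (fun r hr r' hr' => hE_sub (by simp [E, Set.add_mem_add hr hr']))
      (fun r hr => hE_sub (by simp [E, hr]))
      (fun r hr r' hr' => hE_sub (by simp [E, Set.mul_mem_mul hr hr']))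
      (fun r hr => hE_sub (by simp [E, hr]))
  have huniv := hgen _ hsub fun s hs => hE_sub (by simp [E, hs])
  refine (AddSubgroup.fg_iff _).mpr ⟨D, le_antisymm hA fun z hz => ?_, hD⟩
  obtain ⟨a, ha, r, hr, rfl⟩ : z ∈ (A : Set B) + R := huniv ▸ Set.mem_univ z
  have hr_ann : -r ∈ ann B := by
    simpa using add_mem (neg_mem (hA ha)) hz
  have hr_A : -r ∈ A :=
    AddSubgroup.subset_closure ⟨hr_ann, r, hr, 0, Set.mem_insert _ _, by simp⟩
  simpa using A.add_mem ha (A.neg_mem hr_A)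

theorem finite_ann_of_fg (hfg : (ann B).FG) {e : ℕ} (he : 0 < e)
    (hexp : ∀ z ∈ ann B, e • z = 0) : Finite (ann B) := by
  let : AddCommGroup (ann B) :=
    { (ann B).toAddGroup with add_comm := fun a b => Subtype.ext (ann_add_comm a.2 b) }
  have : AddGroup.FG (ann B) := (AddGroup.fg_iff_addSubgroup_fg _).mpr hfg
  exact AddCommGroup.finite_of_fg_isAddTorsion _ fun z =>
    isOfFinAddOrder_iff_nsmul_eq_zero.mpr ⟨e, he, Subtype.ext (hexp _ z.2)⟩

end FiniteGeneration

theorem finite_of_annSeries_eq_univ {n e : ℕ} (hn : annSeries B n = Set.univ)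
    (hfg : SBFinitelyGenerated B) (he : 0 < e) (hexp : ∀ z ∈ ann B, e • z = 0) :
    Finite B := by
  induction n generalizing B with
  | zero => exact Set.finite_univ_iff.mp (hn ▸ Set.finite_singleton 0)
  | succ n ih =>
    have : Finite (B ⧸ ann B) := ih (annSeries_quotient_eq_univ hn) hfg.quotient
      fun _ => nsmul_eq_zero_of_mem_ann_quotient hexp
    have : Finite (ann B) := finite_ann_of_fg (ann_fg_of_finite_quotient hfg) he hexp
    exact Finite.of_addSubgroup_quotient (ann B)

/-- Lemma 4.4: an annihilator nilpotent skew brace with finite annihilator that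
is finitely generated as a skew brace is finite. -/
theorem stmt15 {B : Type*} [SkewBrace B] (hann : AnnNilpotent B)
    (hfin : (annSet B).Finite) (hfg : SBFinitelyGenerated B) :
    Finite B := by
  obtain ⟨n, hn⟩ := hann
  have : Finite (ann B) := hfin.to_subtype
  exact finite_of_annSeries_eq_univ hn hfg
    (Nat.pos_of_ne_zero AddMonoid.exponent_ne_zero_of_finite) fun z hz =>
      congrArg Subtype.val (AddMonoid.exponent_nsmul_eq_zero (⟨z, hz⟩ : ann B))

end SkewBrace
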